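/- arXiv:1607.02370 — 3 statements merged into one kernel-verified Lean document; each statement's English description precedes it below -/
import Mathlib

section
/- For every u ∈ ℤ_p, φ_{p,q}(u) is rational if and only if the sequence (g_{p,q}^n(u))_{n∈ℕ} is ultimately periodic, i.e. φ_{p,q}^{−1}(ℚ ∩ ℤ_p) = {u ∈ ℤ_p : ∃ n₀ ∈ ℕ, ∃ k ≥ 1, g_{p,q}^{n₀+k}(u) = g_{p,q}^{n₀}(u)}. -/
open scoped Classical

/-- `ε₀(u)`: the unique integer in `{0, …, p−1}` congruent to `u` modulo `p`. -/
noncomputable def eps0 {p : ℕ} [Fact p.Prime] (u : ℤ_[p]) : ℕ := (PadicInt.toZMod u).val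

/-- `φ_{p,q}(u) = Σ ε₀(-q·g^n(u)) p^n`, for a given iteration map `g`. -/
noncomputable def phi (p q : ℕ) [Fact p.Prime] (g : ℤ_[p] → ℤ_[p]) (u : ℤ_[p]) : ℤ_[p] :=
  ∑' n : ℕ, (eps0 (-((q : ℤ_[p]) * g^[n] u)) : ℤ_[p]) * (p : ℤ_[p]) ^ n

section Aux

variable {p q : ℕ} [hp : Fact p.Prime] (g : ℤ_[p] → ℤ_[p])

lemma eps0_lt (u : ℤ_[p]) : eps0 u < p := by
  haveI : NeZero p := ⟨hp.out.pos.ne'⟩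
  exact ZMod.val_lt _

lemma summable_aux (u : ℤ_[p]) :
    Summable (fun n : ℕ => (eps0 (-((q : ℤ_[p]) * g^[n] u)) : ℤ_[p]) * (p : ℤ_[p]) ^ n) := by
  apply Summable.of_norm_bounded (g := fun n => ‖(p : ℤ_[p])‖ ^ n)
  · apply summable_geometric_of_lt_one (norm_nonneg _)
    rw [PadicInt.norm_p]
    have h1 : (1 : ℝ) < p := by exact_mod_cast hp.out.one_lt
    exact inv_lt_one_of_one_lt₀ h1
  · intro n
    have hpow : ‖(p : ℤ_[p]) ^ n‖ = ‖(p : ℤ_[p])‖ ^ n := by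
      induction n with
      | zero => simp
      | succ n ih => rw [pow_succ, pow_succ, norm_mul, ih]
    calc ‖(eps0 (-((q : ℤ_[p]) * g^[n] u)) : ℤ_[p]) * (p : ℤ_[p]) ^ n‖
        = ‖(eps0 (-((q : ℤ_[p]) * g^[n] u)) : ℤ_[p])‖ * ‖(p : ℤ_[p]) ^ n‖ :=
          norm_mul _ _
      _ ≤ 1 * ‖(p : ℤ_[p]) ^ n‖ := by
          gcongr
          exact PadicInt.norm_le_one _
      _ = ‖(p : ℤ_[p])‖ ^ n := by rw [one_mul, hpow]

lemma phi_succ (u : ℤ_[p]) :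
    phi p q g u = (eps0 (-((q : ℤ_[p]) * u)) : ℤ_[p]) + (p : ℤ_[p]) * phi p q g (g u) := by
  unfold phi
  rw [Summable.tsum_eq_zero_add (summable_aux g u)]
  have h0 : (eps0 (-((q : ℤ_[p]) * g^[0] u)) : ℤ_[p]) * (p : ℤ_[p]) ^ 0
      = (eps0 (-((q : ℤ_[p]) * u)) : ℤ_[p]) := by simp
  rw [h0]
  congr 1
  have hterm : ∀ n : ℕ, (eps0 (-((q : ℤ_[p]) * g^[n + 1] u)) : ℤ_[p]) * (p : ℤ_[p]) ^ (n + 1)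
      = (p : ℤ_[p]) * ((eps0 (-((q : ℤ_[p]) * g^[n] (g u))) : ℤ_[p]) * (p : ℤ_[p]) ^ n) := by
    intro n
    rw [Function.iterate_succ_apply]
    ring
  rw [tsum_congr hterm]
  exact (summable_aux (q := q) g (g u)).tsum_mul_left _

lemma eps0_phi (u : ℤ_[p]) : eps0 (phi p q g u) = eps0 (-((q : ℤ_[p]) * u)) := by
  haveI : NeZero p := ⟨hp.out.pos.ne'⟩
  have h := phi_succ (q := q) g u
  unfold eps0
  rw [h, map_add, map_mul, map_natCast, map_natCast, ZMod.natCast_self, zero_mul, add_zero,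
    ZMod.val_cast_of_lt (eps0_lt _)]
  rfl

lemma phi_iterate (u : ℤ_[p]) (m : ℕ) :
    phi p q g u
      = ((∑ j ∈ Finset.range m, eps0 (-((q : ℤ_[p]) * g^[j] u)) * p ^ j : ℕ) : ℤ_[p])
        + (p : ℤ_[p]) ^ m * phi p q g (g^[m] u) := by
  induction m with
  | zero => simp
  | succ m ih =>
    rw [ih, Finset.sum_range_succ, phi_succ (q := q) g (g^[m] u), ← Function.iterate_succ_apply' g m u]
    push_cast
    ring

lemma q_isUnit (hpq : Nat.Coprime p q) : IsUnit (q : ℤ_[p]) := by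
  rw [PadicInt.isUnit_iff]
  have h1 : ‖(q : ℤ_[p])‖ ≤ 1 := PadicInt.norm_le_one _
  have h2 : ¬ ‖(q : ℤ_[p])‖ < 1 := by
    have : ((q : ℤ) : ℤ_[p]) = (q : ℤ_[p]) := by push_cast; rfl
    rw [← this, PadicInt.norm_int_lt_one_iff_dvd]
    intro hdvd
    have : (p : ℤ) ∣ (q : ℤ) := hdvd
    have hpq' : p ∣ q := by exact_mod_cast this
    exact (Nat.Prime.coprime_iff_not_dvd hp.out).mp hpq hpq'
  linarith [lt_or_eq_of_le h1]

lemma toZMod_eq_zero_iff (x : ℤ_[p]) : PadicInt.toZMod x = 0 ↔ (p : ℤ_[p]) ∣ x := by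
  rw [← RingHom.mem_ker, PadicInt.ker_toZMod, PadicInt.maximalIdeal_eq_span_p,
    Ideal.mem_span_singleton]

lemma phi_inj (hpq : Nat.Coprime p q)
    (hg : ∀ u : ℤ_[p], (p : ℤ_[p]) * g u =
      if (p : ℤ_[p]) ∣ u then u
      else (q : ℤ_[p]) * u + (eps0 (-((q : ℤ_[p]) * u)) : ℤ_[p])) :
    Function.Injective (phi p q g) := by
  haveI : NeZero p := ⟨hp.out.pos.ne'⟩
  have hqunit : IsUnit (q : ℤ_[p]) := q_isUnit hpq
  have hp0 : (p : ℤ_[p]) ≠ 0 := by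
    exact_mod_cast (Nat.cast_ne_zero (R := ℤ_[p])).mpr hp.out.pos.ne'
  -- p ∣ u iff the first digit vanishes
  have hdigit0 : ∀ u : ℤ_[p], eps0 (-((q : ℤ_[p]) * u)) = 0 ↔ (p : ℤ_[p]) ∣ u := by
    intro u
    unfold eps0
    rw [ZMod.val_eq_zero, toZMod_eq_zero_iff]
    rw [dvd_neg]
    exact hqunit.dvd_mul_left
  have key : ∀ n : ℕ, ∀ u v : ℤ_[p], phi p q g u = phi p q g v → (p : ℤ_[p]) ^ n ∣ (u - v) := by
    intro n
    induction n with
    | zero => intro u v _; simp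
    | succ n ih =>
      intro u v h
      have ha : eps0 (-((q : ℤ_[p]) * u)) = eps0 (-((q : ℤ_[p]) * v)) := by
        rw [← eps0_phi g u, ← eps0_phi g v, h]
      have hnext : phi p q g (g u) = phi p q g (g v) := by
        have h1 := phi_succ (q := q) g u
        have h2 := phi_succ (q := q) g v
        have h3 : (p : ℤ_[p]) * phi p q g (g u) = (p : ℤ_[p]) * phi p q g (g v) := by
          have := h1.symm.trans (h.trans h2)
          rw [ha] at this
          exact add_left_cancel this
        exact mul_left_cancel₀ hp0 h3
      have hd := ih (g u) (g v) hnext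
      by_cases hu : (p : ℤ_[p]) ∣ u
      · have hv : (p : ℤ_[p]) ∣ v := by
          rw [← hdigit0, ← ha, hdigit0]; exact hu
        have e1 := hg u; rw [if_pos hu] at e1
        have e2 := hg v; rw [if_pos hv] at e2
        have : u - v = (p : ℤ_[p]) * (g u - g v) := by rw [mul_sub, e1, e2]
        rw [this, pow_succ']
        exact mul_dvd_mul_left _ hd
      · have hv : ¬ (p : ℤ_[p]) ∣ v := by
          rw [← hdigit0, ← ha, hdigit0]; exact hu
        have e1 := hg u; rw [if_neg hu] at e1
        have e2 := hg v; rw [if_neg hv] at e2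
        have e3 : (q : ℤ_[p]) * (u - v) = (p : ℤ_[p]) * (g u - g v) := by
          rw [mul_sub, mul_sub, e1, e2, ha]; ring
        have e4 : (p : ℤ_[p]) ^ (n + 1) ∣ (q : ℤ_[p]) * (u - v) := by
          rw [e3, pow_succ']
          exact mul_dvd_mul_left _ hd
        exact (hqunit.dvd_mul_left).mp e4
  intro u v h
  have hb : ∀ n : ℕ, ‖u - v‖ ≤ ((p : ℝ)⁻¹) ^ n := by
    intro n
    have := (PadicInt.norm_le_pow_iff_mem_span_pow (u - v) n).mpr
      (Ideal.mem_span_singleton.mpr (key n u v h))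
    calc ‖u - v‖ ≤ (p : ℝ) ^ (-n : ℤ) := this
      _ = ((p : ℝ)⁻¹) ^ n := by rw [zpow_neg, inv_pow, zpow_natCast]
  have hlim : Filter.Tendsto (fun n : ℕ => ((p : ℝ)⁻¹) ^ n) Filter.atTop (nhds 0) := by
    apply tendsto_pow_atTop_nhds_zero_of_lt_one
    · positivity
    · have h1 : (1 : ℝ) < p := by exact_mod_cast hp.out.one_lt
      exact inv_lt_one_of_one_lt₀ h1
  have hle : ‖u - v‖ ≤ 0 := ge_of_tendsto' hlim hb
  have h0 : u - v = 0 := norm_eq_zero.mp (le_antisymm hle (norm_nonneg _))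
  exact sub_eq_zero.mp h0

end Aux

/-- `φ_{p,q}(u)` is rational iff the orbit of `u` under `g_{p,q}` is ultimately periodic:
`φ_{p,q}⁻¹(ℚ ∩ ℤ_p) = {u : ∃ n₀, ∃ k ≥ 1, g^{n₀+k}(u) = g^{n₀}(u)}`. -/
theorem stmt3 (p q : ℕ) [Fact p.Prime] (hq : 0 < q) (hpq : Nat.Coprime p q)
    (g : ℤ_[p] → ℤ_[p])
    (hg : ∀ u : ℤ_[p], (p : ℤ_[p]) * g u =
      if (p : ℤ_[p]) ∣ u then u
      else (q : ℤ_[p]) * u + (eps0 (-((q : ℤ_[p]) * u)) : ℤ_[p]))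
    (u : ℤ_[p]) :
    ((phi p q g u : ℤ_[p]) : ℚ_[p]) ∈ Set.range ((↑) : ℚ → ℚ_[p]) ↔
      ∃ n₀ : ℕ, ∃ k ≥ 1, g^[n₀ + k] u = g^[n₀] u := by
  have hp := (inferInstance : Fact p.Prime)
  have hp1 : (1 : ℝ) < p := by exact_mod_cast hp.out.one_lt
  have hpQ0 : ((p : ℚ_[p])) ≠ 0 := by
    exact_mod_cast (Nat.cast_ne_zero (R := ℚ_[p])).mpr hp.out.pos.ne'
  have hcoeinj : Function.Injective ((↑) : ℤ_[p] → ℚ_[p]) := Subtype.coe_injective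
  constructor
  · rintro ⟨r, hr⟩
    -- the sequence of p-adic "tails"
    set t : ℕ → ℤ_[p] := fun n => phi p q g (g^[n] u) with ht
    -- recurrence in ℚ_p
    have htrec : ∀ n : ℕ, ((t n : ℚ_[p]))
        = (eps0 (-((q : ℤ_[p]) * g^[n] u)) : ℚ_[p]) + (p : ℚ_[p]) * (t (n + 1) : ℚ_[p]) := by
      intro n
      have h := phi_succ (q := q) g (g^[n] u)
      rw [← Function.iterate_succ_apply' g n u] at h
      have := congrArg ((↑) : ℤ_[p] → ℚ_[p]) h
      push_cast at this ⊢
      exact this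
    -- rational representatives of the tails
    have hex : ∀ n : ℕ, ∃ s : ℚ, (s : ℚ_[p]) = (t n : ℚ_[p]) := by
      intro n
      induction n with
      | zero =>
        refine ⟨r, ?_⟩
        simpa [ht] using hr
      | succ n ih =>
        obtain ⟨s, hs⟩ := ih
        refine ⟨(s - (eps0 (-((q : ℤ_[p]) * g^[n] u)) : ℚ)) / (p : ℚ), ?_⟩
        have h := htrec n
        push_cast
        rw [div_eq_iff hpQ0]
        rw [hs]
        linear_combination h
    choose s hs using hex
    -- rational recurrence
    have hsrec : ∀ n : ℕ, (p : ℚ) * s (n + 1) = s n - (eps0 (-((q : ℤ_[p]) * g^[n] u)) : ℚ) := by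
      intro n
      have hinj : Function.Injective ((↑) : ℚ → ℚ_[p]) := Rat.cast_injective
      apply hinj
      push_cast
      rw [hs, hs]
      linear_combination -htrec n
    -- bounded integer numerators
    set B : ℕ := (s 0).den with hB
    have hBpos : 0 < (B : ℤ) := by exact_mod_cast (s 0).den_pos
    set M : ℤ := max |(s 0).num| (B : ℤ) with hM
    have hBM : (B : ℤ) ≤ M := le_max_right _ _
    have hnorm_t : ∀ n : ℕ, ‖((B : ℚ_[p]) * (t n : ℚ_[p]))‖ ≤ 1 := by
      intro n
      have : ((B : ℚ_[p]) * (t n : ℚ_[p])) = (((B : ℤ_[p]) * t n : ℤ_[p]) : ℚ_[p]) := by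
        push_cast; ring
      rw [this, PadicInt.padic_norm_e_of_padicInt]
      exact PadicInt.norm_le_one _
    have hmex : ∀ n : ℕ, ∃ m : ℤ, (m : ℚ) = (B : ℚ) * s n ∧ |m| ≤ M := by
      intro n
      induction n with
      | zero =>
        refine ⟨(s 0).num, ?_, le_max_left _ _⟩
        have hden : ((s 0).den : ℚ) ≠ 0 := by exact_mod_cast (s 0).den_pos.ne'
        rw [hB, mul_comm]
        exact (div_eq_iff hden).mp (Rat.num_div_den (s 0))
      | succ n ih =>
        obtain ⟨m, hm, hmle⟩ := ih
        set a : ℕ := eps0 (-((q : ℤ_[p]) * g^[n] u)) with hadef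
        have halt : a < p := eps0_lt _
        -- p divides m - a * B
        have hdvd : (p : ℤ) ∣ (m - (a : ℤ) * B) := by
          by_contra hnd
          have hnum_norm : ‖((m - (a : ℤ) * B : ℤ) : ℚ_[p])‖ = 1 := by
            have hle : ‖((m - (a : ℤ) * B : ℤ) : ℚ_[p])‖ ≤ 1 := Padic.norm_int_le_one _
            have hlt := (Padic.norm_intCast_lt_one_iff (k := m - (a : ℤ) * B)).not.mpr hnd
            rcases lt_or_eq_of_le hle with h' | h'
            · exact absurd h' hlt
            · exact h'
          have heq : ((B : ℚ_[p]) * (t (n + 1) : ℚ_[p]))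
              = ((m - (a : ℤ) * B : ℤ) : ℚ_[p]) / (p : ℚ_[p]) := by
            rw [eq_div_iff hpQ0]
            have h1 := hs (n + 1)
            have h2 := hs n
            have h3 := hsrec n
            have h4 := congrArg ((↑) : ℚ → ℚ_[p]) h3
            have h5 := congrArg ((↑) : ℚ → ℚ_[p]) hm
            push_cast at h4 h5 ⊢
            rw [h1, h2] at h4
            rw [h2] at h5
            linear_combination (B : ℚ_[p]) * h4 - h5
          have hnrm : ‖((B : ℚ_[p]) * (t (n + 1) : ℚ_[p]))‖ = (p : ℝ) := by
            rw [heq, norm_div, hnum_norm, Padic.norm_p]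
            rw [one_div, inv_inv]
          have := hnorm_t (n + 1)
          rw [hnrm] at this
          linarith
        obtain ⟨m', hm'⟩ := hdvd
        refine ⟨m', ?_, ?_⟩
        · have h3 := hsrec n
          have hpQ : (p : ℚ) ≠ 0 := by exact_mod_cast hp.out.pos.ne'
          have : (p : ℚ) * ((B : ℚ) * s (n + 1)) = (p : ℚ) * (m' : ℚ) := by
            have hmq : ((m - (a : ℤ) * B : ℤ) : ℚ) = (p : ℚ) * (m' : ℚ) := by
              exact_mod_cast congrArg (fun z : ℤ => (z : ℚ)) hm'
            push_cast at hmq ⊢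
            linear_combination (B : ℚ) * h3 + hmq - hm
          exact (mul_left_cancel₀ hpQ this).symm
        · -- |m'| ≤ M
          have h1 : (p : ℤ) * |m'| = |m - (a : ℤ) * B| := by
            rw [hm', abs_mul, abs_of_nonneg (by positivity : (0:ℤ) ≤ (p:ℤ))]
          have h2 : |m - (a : ℤ) * B| ≤ |m| + (a : ℤ) * B := by
            calc |m - (a : ℤ) * B| ≤ |m| + |(a : ℤ) * B| := abs_sub _ _
              _ = |m| + (a : ℤ) * B := by
                  rw [abs_of_nonneg (by positivity : (0:ℤ) ≤ (a : ℤ) * B)]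
          have h3 : (a : ℤ) * B ≤ ((p : ℤ) - 1) * M := by
            have ha' : (a : ℤ) ≤ (p : ℤ) - 1 := by
              have : (a : ℤ) < (p : ℤ) := by exact_mod_cast halt
              omega
            have hMpos : 0 < M := lt_of_lt_of_le hBpos hBM
            calc (a : ℤ) * B ≤ ((p : ℤ) - 1) * B := by
                  apply mul_le_mul_of_nonneg_right ha' (le_of_lt hBpos)
              _ ≤ ((p : ℤ) - 1) * M := by
                  apply mul_le_mul_of_nonneg_left hBM
                  have : (2 : ℤ) ≤ p := by exact_mod_cast hp.out.two_le
                  omega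
          have h4 : (p : ℤ) * |m'| ≤ (p : ℤ) * M := by
            rw [h1]
            calc |m - (a : ℤ) * B| ≤ |m| + (a : ℤ) * B := h2
              _ ≤ M + ((p : ℤ) - 1) * M := add_le_add hmle h3
              _ = (p : ℤ) * M := by ring
          have hppos : (0 : ℤ) < p := by exact_mod_cast hp.out.pos
          exact le_of_mul_le_mul_left h4 hppos
    choose m hm hmle using hmex
    -- pigeonhole
    have hmem : ∀ n : ℕ, m n ∈ Finset.Icc (-M) M := by
      intro n
      rw [Finset.mem_Icc]
      exact abs_le.mp (hmle n)
    have : ∃ n₁ n₂ : ℕ, n₁ ≠ n₂ ∧ m n₁ = m n₂ := by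
      obtain ⟨n₁, n₂, hne, heq⟩ := Finite.exists_ne_map_eq_of_infinite
        (fun n : ℕ => (⟨m n, hmem n⟩ : (Finset.Icc (-M) M)))
      exact ⟨n₁, n₂, hne, by simpa using heq⟩
    obtain ⟨n₁, n₂, hne, hmeq⟩ := this
    -- deduce equality of iterates
    have hteq : ∀ {i j : ℕ}, m i = m j → g^[i] u = g^[j] u := by
      intro i j hij
      have hs' : s i = s j := by
        have hBQ : (B : ℚ) ≠ 0 := by exact_mod_cast (s 0).den_pos.ne'
        have : (B : ℚ) * s i = (B : ℚ) * s j := by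
          rw [← hm i, ← hm j, hij]
        exact mul_left_cancel₀ hBQ this
      have : (t i : ℚ_[p]) = (t j : ℚ_[p]) := by rw [← hs i, ← hs j, hs']
      have htij : t i = t j := hcoeinj this
      exact phi_inj g hpq hg htij
    rcases Nat.lt_or_ge n₁ n₂ with hlt | hge
    · exact ⟨n₁, n₂ - n₁, by omega, by
        rw [show n₁ + (n₂ - n₁) = n₂ by omega]
        exact hteq hmeq.symm⟩
    · have hlt : n₂ < n₁ := by omega
      exact ⟨n₂, n₁ - n₂, by omega, by
        rw [show n₂ + (n₁ - n₂) = n₁ by omega]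
        exact hteq hmeq⟩
  · rintro ⟨n₀, k, hk, hper⟩
    set v : ℤ_[p] := g^[n₀] u with hv
    have hvper : g^[k] v = v := by
      rw [hv, ← Function.iterate_add_apply, add_comm]
      exact hper
    have h1 := phi_iterate (q := q) g v k
    rw [hvper] at h1
    have h2 := phi_iterate (q := q) g u n₀
    rw [← hv] at h2
    set S : ℕ := ∑ j ∈ Finset.range k, eps0 (-((q : ℤ_[p]) * g^[j] v)) * p ^ j with hS
    set T : ℕ := ∑ j ∈ Finset.range n₀, eps0 (-((q : ℤ_[p]) * g^[j] u)) * p ^ j with hT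
    -- in ℚ_p
    have hc1 : (phi p q g v : ℚ_[p]) = (S : ℚ_[p]) + (p : ℚ_[p]) ^ k * (phi p q g v : ℚ_[p]) := by
      have := congrArg ((↑) : ℤ_[p] → ℚ_[p]) h1
      push_cast at this ⊢
      exact this
    have hc2 : (phi p q g u : ℚ_[p]) = (T : ℚ_[p]) + (p : ℚ_[p]) ^ n₀ * (phi p q g v : ℚ_[p]) := by
      have := congrArg ((↑) : ℤ_[p] → ℚ_[p]) h2
      push_cast at this ⊢
      exact this
    have hpkQ : ((p : ℚ)) ^ k ≠ 1 := by
      have h2p : (2 : ℚ) ≤ p := by exact_mod_cast hp.out.two_le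
      have : (2 : ℚ) ≤ (p : ℚ) ^ k := by
        calc (2 : ℚ) = 2 ^ 1 := by norm_num
          _ ≤ (2 : ℚ) ^ k := by
              apply pow_le_pow_right₀ (by norm_num) hk
          _ ≤ (p : ℚ) ^ k := by
              apply pow_le_pow_left₀ (by norm_num) h2p
      linarith
    have hQne : (1 - (p : ℚ) ^ k) ≠ 0 := by
      intro h
      exact hpkQ (by linarith [sub_eq_zero.mp h])
    have hQpne : (1 - (p : ℚ_[p]) ^ k) ≠ 0 := by
      intro h
      have hnorm : ‖(p : ℚ_[p]) ^ k‖ < 1 := by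
        rw [norm_pow, Padic.norm_p]
        exact pow_lt_one₀ (by positivity) (inv_lt_one_of_one_lt₀ hp1) (by omega)
      rw [← sub_eq_zero.mp h, norm_one] at hnorm
      linarith
    refine ⟨(T : ℚ) + (p : ℚ) ^ n₀ * ((S : ℚ) / (1 - (p : ℚ) ^ k)), ?_⟩
    have hx : (phi p q g v : ℚ_[p]) * (1 - (p : ℚ_[p]) ^ k) = (S : ℚ_[p]) := by
      linear_combination hc1
    apply mul_right_cancel₀ hQpne
    push_cast
    have hdiv : (S : ℚ_[p]) / (1 - (p : ℚ_[p]) ^ k) = (phi p q g v : ℚ_[p]) := by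
      rw [div_eq_iff hQpne]
      exact hx.symm
    rw [hdiv]
    linear_combination -hc2 * (1 - (p : ℚ_[p]) ^ k)
end

section
/- The map φ_{p,q} is a bijective isometry of ℤ_p: it is a bijection of ℤ_p onto itself and for all u, v ∈ ℤ_p, |φ_{p,q}(u) − φ_{p,q}(v)|_p = |u − v|_p. -/
open scoped Classical

/-!
With `a u = ε₀(-q u)` one has `φ u = a u + p φ (g u)`. If `u ≡ v [p]` then `a u = a v`, and
`p (g u - g v)` is `u - v` or `q (u - v)`, an associate of `u - v` because `p ∤ q`. Induction on `k`
therefore gives `p^k ∣ φ u - φ v ↔ p^k ∣ u - v`, so `φ` is an isometry. An isometry of a compact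
metric space into itself is onto: every point is approached by its own iterates, which lie in
the closed range.
-/

theorem Isometry.iterate {X : Type*} [PseudoEMetricSpace X] {f : X → X} (hf : Isometry f) :
    ∀ n, Isometry f^[n]
  | 0 => isometry_id
  | n + 1 => (hf.iterate n).comp hf

theorem Isometry.exists_dist_iterate_lt {X : Type*} [MetricSpace X] [CompactSpace X]
    {f : X → X} (hf : Isometry f) (x : X) {ε : ℝ} (hε : 0 < ε) :
    ∃ n, 0 < n ∧ dist x (f^[n] x) < ε := by
  obtain ⟨_, -, ψ, hψ, hconv⟩ :=
    isCompact_univ.tendsto_subseq fun n : ℕ => Set.mem_univ (f^[n] x)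
  obtain ⟨N, hN⟩ := Metric.cauchySeq_iff.mp (Filter.Tendsto.cauchySeq hconv) ε hε
  have hlt : ψ N < ψ (N + 1) := hψ N.lt_succ_self
  refine ⟨ψ (N + 1) - ψ N, Nat.sub_pos_of_lt hlt, ?_⟩
  have hsplit : f^[ψ (N + 1)] x = f^[ψ N] (f^[ψ (N + 1) - ψ N] x) := by
    rw [← Function.iterate_add_apply, Nat.add_sub_cancel' hlt.le]
  have := hN N le_rfl (N + 1) N.le_succ
  rwa [Function.comp_apply, Function.comp_apply, hsplit, (hf.iterate _).dist_eq] at this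

theorem Isometry.surjective_of_compactSpace {X : Type*} [MetricSpace X] [CompactSpace X]
    {f : X → X} (hf : Isometry f) : Function.Surjective f := by
  intro x
  suffices x ∈ closure (Set.range f) by
    rwa [(isCompact_range hf.continuous).isClosed.closure_eq] at this
  refine Metric.mem_closure_iff.mpr fun ε hε => ?_
  obtain ⟨n, hn, hdist⟩ := hf.exists_dist_iterate_lt x hε
  refine ⟨f^[n] x, ⟨f^[n.pred] x, ?_⟩, hdist⟩
  rw [← Function.iterate_succ_apply' f, Nat.succ_pred_eq_of_pos hn]

namespace PadicInt

variable {p : ℕ} [Fact p.Prime]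

theorem pow_dvd_iff_norm_le (x : ℤ_[p]) (k : ℕ) :
    (p : ℤ_[p]) ^ k ∣ x ↔ ‖x‖ ≤ (p : ℝ) ^ (-k : ℤ) := by
  rw [norm_le_pow_iff_mem_span_pow, Ideal.mem_span_singleton]

theorem norm_le_of_forall_pow_dvd {x y : ℤ_[p]}
    (h : ∀ k : ℕ, (p : ℤ_[p]) ^ k ∣ y → (p : ℤ_[p]) ^ k ∣ x) : ‖x‖ ≤ ‖y‖ := by
  by_contra! hlt
  have hx : x ≠ 0 := by rintro rfl; exact (norm_nonneg y).not_gt (by simpa using hlt)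
  have hp : (1 : ℝ) < p := mod_cast (Fact.out : p.Prime).one_lt
  have hxn := norm_eq_zpow_neg_valuation hx
  have hy : ‖y‖ ≤ (p : ℝ) ^ (-(x.valuation + 1 : ℕ) : ℤ) := by
    rw [hxn, norm_lt_pow_iff_norm_le_pow_sub_one] at hlt
    convert hlt using 2; push_cast; ring
  have hx' := (pow_dvd_iff_norm_le x _).mp (h _ ((pow_dvd_iff_norm_le y _).mpr hy))
  rw [hxn] at hx'
  have := zpow_le_zpow_iff_right₀ hp |>.mp hx'
  omega

theorem norm_eq_of_forall_pow_dvd_iff {x y : ℤ_[p]}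
    (h : ∀ k : ℕ, (p : ℤ_[p]) ^ k ∣ x ↔ (p : ℤ_[p]) ^ k ∣ y) : ‖x‖ = ‖y‖ :=
  le_antisymm (norm_le_of_forall_pow_dvd fun k => (h k).mpr)
    (norm_le_of_forall_pow_dvd fun k => (h k).mp)

theorem isUnit_natCast_of_coprime {q : ℕ} (hpq : p.Coprime q) : IsUnit (q : ℤ_[p]) :=
  isUnit_iff.mpr (norm_natCast_eq_one_iff.mpr hpq)

theorem dvd_sub_iff_toZMod_eq (u v : ℤ_[p]) :
    (p : ℤ_[p]) ∣ u - v ↔ toZMod u = toZMod v := by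
  rw [← sub_eq_zero, ← map_sub, ← RingHom.mem_ker, ker_toZMod, maximalIdeal_eq_span_p,
    Ideal.mem_span_singleton]

theorem summable_mul_p_pow (c : ℕ → ℤ_[p]) : Summable fun n => c n * (p : ℤ_[p]) ^ n := by
  have hp : (1 : ℝ) < p := mod_cast (Fact.out : p.Prime).one_lt
  refine .of_norm_bounded (summable_geometric_of_lt_one (by positivity) (inv_lt_one_of_one_lt₀ hp))
    fun n => ?_
  calc ‖c n * (p : ℤ_[p]) ^ n‖ ≤ ‖(p : ℤ_[p]) ^ n‖ := by
        rw [norm_mul]; exact mul_le_of_le_one_left (norm_nonneg _) (norm_le_one _)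
    _ = (p : ℝ)⁻¹ ^ n := by rw [norm_p_pow, zpow_neg, zpow_natCast, inv_pow]

end PadicInt

open PadicInt

section

variable {p : ℕ} [Fact p.Prime]

theorem toZMod_eps0 (u : ℤ_[p]) : toZMod (eps0 u : ℤ_[p]) = toZMod u := by
  rw [eps0, map_natCast, ZMod.natCast_zmod_val]

theorem dvd_eps0_sub_eps0_iff (u v : ℤ_[p]) :
    (p : ℤ_[p]) ∣ (eps0 u : ℤ_[p]) - eps0 v ↔ (p : ℤ_[p]) ∣ u - v := by
  rw [dvd_sub_iff_toZMod_eq, dvd_sub_iff_toZMod_eq, toZMod_eps0, toZMod_eps0]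

theorem eps0_eq_eps0_iff (u v : ℤ_[p]) : eps0 u = eps0 v ↔ (p : ℤ_[p]) ∣ u - v := by
  rw [eps0, eps0, (ZMod.val_injective p).eq_iff, dvd_sub_iff_toZMod_eq]

theorem dvd_neg_mul_sub_neg_mul_iff {q : ℕ} (hpq : p.Coprime q) (u v : ℤ_[p]) :
    (p : ℤ_[p]) ∣ -((q : ℤ_[p]) * u) - -((q : ℤ_[p]) * v) ↔ (p : ℤ_[p]) ∣ u - v := by
  rw [show -((q : ℤ_[p]) * u) - -((q : ℤ_[p]) * v) = -((q : ℤ_[p]) * (u - v)) by ring, dvd_neg,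
    (isUnit_natCast_of_coprime hpq).dvd_mul_left]

end

section

variable {p q : ℕ} [Fact p.Prime] {g : ℤ_[p] → ℤ_[p]}

theorem eps0_neg_mul_eq_of_dvd_sub {u v : ℤ_[p]} (h : (p : ℤ_[p]) ∣ u - v) :
    eps0 (-((q : ℤ_[p]) * u)) = eps0 (-((q : ℤ_[p]) * v)) := by
  rw [eps0_eq_eps0_iff, show -((q : ℤ_[p]) * u) - -((q : ℤ_[p]) * v) = -((q : ℤ_[p]) * (u - v)) by
    ring]
  exact (h.mul_left _).neg_right

theorem phi_eq_eps0_add_mul (u : ℤ_[p]) :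
    phi p q g u = eps0 (-((q : ℤ_[p]) * u)) + (p : ℤ_[p]) * phi p q g (g u) := by
  rw [phi, phi, (summable_mul_p_pow _).tsum_eq_zero_add, ← (summable_mul_p_pow _).tsum_mul_left]
  simp only [Function.iterate_zero_apply, pow_zero, mul_one, Function.iterate_succ_apply, pow_succ']
  congr 1
  exact tsum_congr fun n => by ring

theorem phi_sub_phi (u v : ℤ_[p]) :
    phi p q g u - phi p q g v = ((eps0 (-((q : ℤ_[p]) * u)) : ℤ_[p]) - eps0 (-((q : ℤ_[p]) * v))) +
      (p : ℤ_[p]) * (phi p q g (g u) - phi p q g (g v)) := by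
  rw [phi_eq_eps0_add_mul u, phi_eq_eps0_add_mul v]
  ring

theorem phi_sub_phi_of_dvd_sub {u v : ℤ_[p]} (h : (p : ℤ_[p]) ∣ u - v) :
    phi p q g u - phi p q g v = (p : ℤ_[p]) * (phi p q g (g u) - phi p q g (g v)) := by
  rw [phi_sub_phi, eps0_neg_mul_eq_of_dvd_sub h, sub_self, zero_add]

theorem dvd_sub_of_dvd_phi_sub_phi (hpq : p.Coprime q) {u v : ℤ_[p]}
    (h : (p : ℤ_[p]) ∣ phi p q g u - phi p q g v) : (p : ℤ_[p]) ∣ u - v := by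
  rw [phi_sub_phi, dvd_add_left (dvd_mul_right _ _), dvd_eps0_sub_eps0_iff,
    dvd_neg_mul_sub_neg_mul_iff hpq] at h
  exact h

theorem associated_p_mul_sub (hpq : p.Coprime q)
    (hg : ∀ u : ℤ_[p], (p : ℤ_[p]) * g u =
      if (p : ℤ_[p]) ∣ u then u
      else (q : ℤ_[p]) * u + (eps0 (-((q : ℤ_[p]) * u)) : ℤ_[p]))
    {u v : ℤ_[p]} (h : (p : ℤ_[p]) ∣ u - v) :
    Associated ((p : ℤ_[p]) * (g u - g v)) (u - v) := by
  rw [mul_sub, hg u, hg v]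
  by_cases hu : (p : ℤ_[p]) ∣ u
  · rw [if_pos hu, if_pos ((dvd_iff_dvd_of_dvd_sub h).mp hu)]
  · rw [if_neg hu, if_neg (mt (dvd_iff_dvd_of_dvd_sub h).mpr hu), eps0_neg_mul_eq_of_dvd_sub h,
      add_sub_add_right_eq_sub, ← mul_sub]
    exact associated_unit_mul_left _ _ (isUnit_natCast_of_coprime hpq)

theorem pow_dvd_phi_sub_phi_iff (hpq : p.Coprime q)
    (hg : ∀ u : ℤ_[p], (p : ℤ_[p]) * g u =
      if (p : ℤ_[p]) ∣ u then u
      else (q : ℤ_[p]) * u + (eps0 (-((q : ℤ_[p]) * u)) : ℤ_[p]))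
    (k : ℕ) (u v : ℤ_[p]) :
    (p : ℤ_[p]) ^ k ∣ phi p q g u - phi p q g v ↔ (p : ℤ_[p]) ^ k ∣ u - v := by
  induction k generalizing u v with
  | zero => simp
  | succ k ih =>
    have hp : (p : ℤ_[p]) ≠ 0 := Nat.cast_ne_zero.mpr (Fact.out : p.Prime).ne_zero
    by_cases h : (p : ℤ_[p]) ∣ u - v
    · rw [phi_sub_phi_of_dvd_sub h, pow_succ', mul_dvd_mul_iff_left hp, ih,
        ← mul_dvd_mul_iff_left hp, (associated_p_mul_sub hpq hg h).dvd_iff_dvd_right]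
    · have hk : (p : ℤ_[p]) ∣ (p : ℤ_[p]) ^ (k + 1) := dvd_pow_self _ k.succ_ne_zero
      exact iff_of_false (fun h' => h (dvd_sub_of_dvd_phi_sub_phi hpq (hk.trans h')))
        fun h' => h (hk.trans h')

end

theorem stmt4_general (p q : ℕ) [Fact p.Prime] (hpq : Nat.Coprime p q)
    (g : ℤ_[p] → ℤ_[p])
    (hg : ∀ u : ℤ_[p], (p : ℤ_[p]) * g u =
      if (p : ℤ_[p]) ∣ u then u
      else (q : ℤ_[p]) * u + (eps0 (-((q : ℤ_[p]) * u)) : ℤ_[p])) :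
    Function.Bijective (phi p q g) ∧
      ∀ u v : ℤ_[p], ‖phi p q g u - phi p q g v‖ = ‖u - v‖ := by
  have hnorm (u v : ℤ_[p]) : ‖phi p q g u - phi p q g v‖ = ‖u - v‖ :=
    norm_eq_of_forall_pow_dvd_iff fun k => pow_dvd_phi_sub_phi_iff hpq hg k u v
  have hiso : Isometry (phi p q g) := .of_dist_eq fun u v => by
    rw [dist_eq_norm, dist_eq_norm, hnorm]
  exact ⟨⟨hiso.injective, hiso.surjective_of_compactSpace⟩, hnorm⟩

/-- `φ_{p,q}` is a bijective isometry of `ℤ_p`. -/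
theorem stmt4 (p q : ℕ) [Fact p.Prime] (hq : 0 < q) (hpq : Nat.Coprime p q)
    (g : ℤ_[p] → ℤ_[p])
    (hg : ∀ u : ℤ_[p], (p : ℤ_[p]) * g u =
      if (p : ℤ_[p]) ∣ u then u
      else (q : ℤ_[p]) * u + (eps0 (-((q : ℤ_[p]) * u)) : ℤ_[p])) :
    Function.Bijective (phi p q g) ∧
      ∀ u v : ℤ_[p], ‖phi p q g u - phi p q g v‖ = ‖u - v‖ :=
  stmt4_general p q hpq g hg
end

section
/- For every u ∈ ℤ_p, the following identity of formal power series holds in ℚ_p[[T]]: u + Σ_{n=0}^∞ ε₀(−q·u_n)·p^n·q^{−r_n(u)}·T^n = (1 − T) · Σ_{n=0}^∞ p^{n+1}·u_{n+1}·q^{−r_n(u)}·T^n. -/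
open scoped Classical

open scoped Classical in
/-- `r_n(u)`: the number of indices `0 ≤ i ≤ n` with `p ∤ g^i(u)`. -/
noncomputable def rcount (p : ℕ) [Fact p.Prime] (g : ℤ_[p] → ℤ_[p]) (u : ℤ_[p]) (n : ℕ) : ℕ :=
  ((Finset.range (n + 1)).filter fun i => ¬ (p : ℤ_[p]) ∣ g^[i] u).card

/-!
Put `b₀ = u` and `bₙ = pⁿ uₙ q^{-r_{n-1}(u)}` for `n ≥ 1`, so that the right-hand side is
`(1 - T) Σ b_{n+1} Tⁿ = b₀ + Σ (b_{n+1} - bₙ) Tⁿ`. Each difference `b_{n+1} - bₙ` is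
`εₙ pⁿ q^{-rₙ(u)}`: when `p ∣ uₙ` both `εₙ` and the jump of `r` vanish and `p u_{n+1} = uₙ`,
otherwise `p u_{n+1} = q uₙ + εₙ` and `r` increases by one.
-/

open PowerSeries

theorem PowerSeries.C_add_mk_sub_eq_one_sub_X_mul_mk {R : Type*} [Ring R] (b : ℕ → R) :
    C (b 0) + mk (fun n => b (n + 1) - b n) = (1 - X) * mk (fun n => b (n + 1)) := by
  ext (_ | n) <;> simp [sub_mul, coeff_succ_X_mul]

section

variable {p : ℕ} [Fact p.Prime]

lemma eps0_eq_zero_of_dvd {v : ℤ_[p]} (h : (p : ℤ_[p]) ∣ v) : eps0 v = 0 := by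
  have hv : PadicInt.toZMod v = 0 := by
    rwa [← RingHom.mem_ker, PadicInt.ker_toZMod, PadicInt.maximalIdeal_eq_span_p,
      Ideal.mem_span_singleton]
  simp [eps0, hv]

/-- `r_{n-1}(u)`, with the convention `r_{-1}(u) = 0`. -/
noncomputable def rcountBelow (p : ℕ) [Fact p.Prime] (g : ℤ_[p] → ℤ_[p]) (u : ℤ_[p]) (n : ℕ) :
    ℕ :=
  ((Finset.range n).filter fun i => ¬ (p : ℤ_[p]) ∣ g^[i] u).card

lemma rcountBelow_succ (g : ℤ_[p] → ℤ_[p]) (u : ℤ_[p]) (n : ℕ) :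
    rcountBelow p g u (n + 1) =
      rcountBelow p g u n + if (p : ℤ_[p]) ∣ g^[n] u then 0 else 1 := by
  simp only [rcountBelow, Finset.card_filter, Finset.sum_range_succ, ite_not]

lemma rcount_eq_rcountBelow_succ (g : ℤ_[p] → ℤ_[p]) (u : ℤ_[p]) (n : ℕ) :
    rcount p g u n = rcountBelow p g u (n + 1) :=
  rfl

noncomputable def scaledIterate (p q : ℕ) [Fact p.Prime] (g : ℤ_[p] → ℤ_[p]) (u : ℤ_[p])
    (n : ℕ) : ℚ_[p] :=
  (p : ℚ_[p]) ^ n * ((g^[n] u : ℤ_[p]) : ℚ_[p]) * ((q : ℚ_[p]) ^ rcountBelow p g u n)⁻¹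

@[simp]
lemma scaledIterate_zero (q : ℕ) (g : ℤ_[p] → ℤ_[p]) (u : ℤ_[p]) :
    scaledIterate p q g u 0 = u := by
  simp [scaledIterate, rcountBelow]

lemma scaledIterate_succ_sub {q : ℕ} (hq : (q : ℚ_[p]) ≠ 0) {g : ℤ_[p] → ℤ_[p]}
    (hg : ∀ v : ℤ_[p], (p : ℤ_[p]) * g v =
      if (p : ℤ_[p]) ∣ v then v else (q : ℤ_[p]) * v + (eps0 (-((q : ℤ_[p]) * v)) : ℤ_[p]))
    (u : ℤ_[p]) (n : ℕ) :
    scaledIterate p q g u (n + 1) - scaledIterate p q g u n =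
      (eps0 (-((q : ℤ_[p]) * g^[n] u)) : ℚ_[p]) * (p : ℚ_[p]) ^ n *
        ((q : ℚ_[p]) ^ rcount p g u n)⁻¹ := by
  have hstep := congrArg ((↑) : ℤ_[p] → ℚ_[p]) (hg (g^[n] u))
  simp only [scaledIterate, rcount_eq_rcountBelow_succ, rcountBelow_succ,
    Function.iterate_succ_apply']
  split_ifs at hstep ⊢ with h
  · push_cast at hstep
    rw [eps0_eq_zero_of_dvd (dvd_neg.mpr (dvd_mul_of_dvd_right h _)), ← hstep]
    ring
  · push_cast at hstep
    field_simp
    linear_combination (p : ℚ_[p]) ^ n * (q : ℚ_[p]) ^ rcountBelow p g u n * hstep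

end

theorem stmt7_general (p q : ℕ) [Fact p.Prime] (hq : 0 < q)
    (g : ℤ_[p] → ℤ_[p])
    (hg : ∀ u : ℤ_[p], (p : ℤ_[p]) * g u =
      if (p : ℤ_[p]) ∣ u then u
      else (q : ℤ_[p]) * u + (eps0 (-((q : ℤ_[p]) * u)) : ℤ_[p]))
    (u : ℤ_[p]) :
    (PowerSeries.C (u : ℚ_[p]) +
        PowerSeries.mk (fun n : ℕ =>
          (eps0 (-((q : ℤ_[p]) * g^[n] u)) : ℚ_[p]) * (p : ℚ_[p]) ^ n *
            ((q : ℚ_[p]) ^ rcount p g u n)⁻¹)) =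
      (1 - PowerSeries.X) *
        PowerSeries.mk (fun n : ℕ =>
          (p : ℚ_[p]) ^ (n + 1) * ((g^[n + 1] u : ℤ_[p]) : ℚ_[p]) *
            ((q : ℚ_[p]) ^ rcount p g u n)⁻¹) := by
  have hq0 : (q : ℚ_[p]) ≠ 0 := by exact_mod_cast hq.ne'
  have := C_add_mk_sub_eq_one_sub_X_mul_mk (scaledIterate p q g u)
  simp only [scaledIterate_zero, scaledIterate_succ_sub hq0 hg] at this
  exact this

/-- The identity of formal power series in `ℚ_p[[T]]`:
`u + Σ ε₀(-q u_n) p^n q^{-r_n(u)} T^n = (1 - T) · Σ p^{n+1} u_{n+1} q^{-r_n(u)} T^n`. -/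
theorem stmt7 (p q : ℕ) [Fact p.Prime] (hq : 0 < q) (hpq : Nat.Coprime p q)
    (g : ℤ_[p] → ℤ_[p])
    (hg : ∀ u : ℤ_[p], (p : ℤ_[p]) * g u =
      if (p : ℤ_[p]) ∣ u then u
      else (q : ℤ_[p]) * u + (eps0 (-((q : ℤ_[p]) * u)) : ℤ_[p]))
    (u : ℤ_[p]) :
    (PowerSeries.C (u : ℚ_[p]) +
        PowerSeries.mk (fun n : ℕ =>
          (eps0 (-((q : ℤ_[p]) * g^[n] u)) : ℚ_[p]) * (p : ℚ_[p]) ^ n *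
            ((q : ℚ_[p]) ^ rcount p g u n)⁻¹)) =
      (1 - PowerSeries.X) *
        PowerSeries.mk (fun n : ℕ =>
          (p : ℚ_[p]) ^ (n + 1) * ((g^[n + 1] u : ℤ_[p]) : ℚ_[p]) *
            ((q : ℚ_[p]) ^ rcount p g u n)⁻¹) :=
  stmt7_general p q hq g hg u
end
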